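/- With $1 < D < 2$ and $R_n$ defined via the blocks $B_k$, one has $\lim_{n\to\infty} \frac{R_{2n}}{R_n} = D$ and $\lim_{n\to\infty}\frac{R_{n+1}}{R_n} = 1$. -/

import Mathlib

open Filter

noncomputable def Rseq (D : ℝ) (n : ℕ) : ℝ :=
  if n ≤ 1 then 1
  else Real.sqrt 2 * (D ^ (Nat.clog 2 n - 1) +
    ((n : ℝ) - 2 ^ (Nat.clog 2 n - 1) - 1) *
      (D ^ Nat.clog 2 n - D ^ (Nat.clog 2 n - 1)) / 2 ^ (Nat.clog 2 n - 1))

/-!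
On the block `2 ^ m < n ≤ 2 ^ (m + 1)` the sequence is affine in `n` with slope
`δₘ = √2 Dᵐ (D - 1) / 2ᵐ`, it is at least `√2 Dᵐ`, and it passes continuously from one block to
the next. Hence `R (n + 1) = R n + δₘ` and `R (2 n) = D R n + D δₘ / 2`, and both corrections
are `O(1 / n)` relative to `R n` because `2ᵐ` is comparable to `n`.
-/

lemma Nat.clog_eq_succ_of_pow_lt_of_le {b m n : ℕ} (hb : 1 < b) (h₁ : b ^ m < n)
    (h₂ : n ≤ b ^ (m + 1)) : Nat.clog b n = m + 1 :=
  le_antisymm ((Nat.clog_le_iff_le_pow hb).2 h₂)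
    (Nat.succ_le_of_lt ((Nat.lt_clog_iff_pow_lt hb).2 h₁))

lemma Nat.exists_pow_lt_le_pow_succ {b n : ℕ} (hb : 1 < b) (hn : 1 < n) :
    ∃ m, b ^ m < n ∧ n ≤ b ^ (m + 1) :=
  ⟨Nat.clog b n - 1, Nat.pow_pred_clog_lt_self hb hn, by
    rw [Nat.sub_add_cancel (Nat.clog_pos hb hn)]; exact Nat.le_pow_clog hb n⟩

lemma div_mem_Icc_of_eq_mul_add {x r c e L : ℝ} (hx : x = c * r + L * e) (hL : 0 < L)
    (hLr : L ≤ r) (he : 0 ≤ e) : c ≤ x / r ∧ x / r ≤ c + e := by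
  have hr : 0 < r := hL.trans_le hLr
  have hx' : x / r = c + L * e / r := by rw [hx]; field_simp
  have hLe : L * e / r ≤ e := by
    rw [div_le_iff₀ hr]; nlinarith
  rw [hx']
  exact ⟨le_add_of_nonneg_right (by positivity), by linarith⟩

lemma tendsto_of_mem_Icc_add_div {f : ℕ → ℝ} {c K : ℝ}
    (h : ∀ᶠ n in atTop, c ≤ f n ∧ f n ≤ c + K / n) : Tendsto f atTop (nhds c) := by
  have hupper : Tendsto (fun n : ℕ => c + K / n) atTop (nhds c) := by
    simpa using (tendsto_const_div_atTop_nhds_zero_nat K).const_add c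
  exact tendsto_of_tendsto_of_tendsto_of_le_of_le' tendsto_const_nhds hupper
    (h.mono fun _ hn => hn.1) (h.mono fun _ hn => hn.2)

namespace Rseq

variable {D : ℝ} {m n : ℕ}

lemma eq_of_pow_lt_of_le (h₁ : 2 ^ m < n) (h₂ : n ≤ 2 ^ (m + 1)) :
    Rseq D n = √2 * D ^ m * (1 + ((n : ℝ) - 2 ^ m - 1) * (D - 1) / 2 ^ m) := by
  have hn : ¬n ≤ 1 := by have := Nat.one_le_two_pow (n := m); omega
  rw [Rseq, if_neg hn, Nat.clog_eq_succ_of_pow_lt_of_le one_lt_two h₁ h₂, Nat.add_sub_cancel,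
    pow_succ]
  field_simp

lemma succ_eq (h₁ : 2 ^ m < n) (h₂ : n ≤ 2 ^ (m + 1)) :
    Rseq D (n + 1) = Rseq D n + √2 * D ^ m * ((D - 1) / 2 ^ m) := by
  rw [eq_of_pow_lt_of_le h₁ h₂]
  rcases h₂.lt_or_eq with hlt | rfl
  · rw [eq_of_pow_lt_of_le (by omega) hlt]
    push_cast
    ring
  · rw [eq_of_pow_lt_of_le (m := m + 1) (by omega) (by rw [pow_succ 2 (m + 1)]; omega)]
    push_cast
    field_simp
    ring

lemma two_mul_eq (h₁ : 2 ^ m < n) (h₂ : n ≤ 2 ^ (m + 1)) :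
    Rseq D (2 * n) = D * Rseq D n + √2 * D ^ m * (D * (D - 1) / 2 ^ (m + 1)) := by
  have h₁' : 2 ^ (m + 1) < 2 * n := by rw [pow_succ]; omega
  have h₂' : 2 * n ≤ 2 ^ (m + 1 + 1) := by rw [pow_succ 2 (m + 1)]; omega
  rw [eq_of_pow_lt_of_le h₁ h₂, eq_of_pow_lt_of_le h₁' h₂']
  push_cast
  field_simp
  ring

lemma sqrt_two_mul_pow_le (hD : 1 ≤ D) (h₁ : 2 ^ m < n) (h₂ : n ≤ 2 ^ (m + 1)) :
    √2 * D ^ m ≤ Rseq D n := by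
  have h₁' : (2 : ℝ) ^ m + 1 ≤ n := by exact_mod_cast h₁
  rw [eq_of_pow_lt_of_le h₁ h₂]
  refine le_mul_of_one_le_right (by positivity) (le_add_of_nonneg_right ?_)
  exact div_nonneg (mul_nonneg (by linarith) (by linarith)) (by positivity)

lemma succ_div_mem_Icc (hD : 1 ≤ D) (hn : 2 ≤ n) :
    1 ≤ Rseq D (n + 1) / Rseq D n ∧
      Rseq D (n + 1) / Rseq D n ≤ 1 + 2 * (D - 1) / n := by
  obtain ⟨m, h₁, h₂⟩ := Nat.exists_pow_lt_le_pow_succ one_lt_two hn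
  have hD' : 0 ≤ D - 1 := by linarith
  obtain ⟨hlower, hupper⟩ := div_mem_Icc_of_eq_mul_add (x := Rseq D (n + 1)) (c := 1)
    (by rw [succ_eq h₁ h₂, one_mul])
    (by positivity) (sqrt_two_mul_pow_le hD h₁ h₂) (by positivity)
  refine ⟨hlower, hupper.trans (add_le_add_right ?_ 1)⟩
  have h₂' : (n : ℝ) ≤ 2 * 2 ^ m := by rw [← pow_succ']; exact_mod_cast h₂
  rw [div_le_div_iff₀ (by positivity) (by positivity)]
  nlinarith

lemma two_mul_div_mem_Icc (hD : 1 ≤ D) (hn : 2 ≤ n) :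
    D ≤ Rseq D (2 * n) / Rseq D n ∧
      Rseq D (2 * n) / Rseq D n ≤ D + D * (D - 1) / n := by
  obtain ⟨m, h₁, h₂⟩ := Nat.exists_pow_lt_le_pow_succ one_lt_two hn
  have hD' : 0 ≤ D * (D - 1) := mul_nonneg (by linarith) (by linarith)
  obtain ⟨hlower, hupper⟩ := div_mem_Icc_of_eq_mul_add (two_mul_eq h₁ h₂)
    (by positivity) (sqrt_two_mul_pow_le hD h₁ h₂) (by positivity)
  refine ⟨hlower, hupper.trans (add_le_add_right ?_ D)⟩
  exact div_le_div_of_nonneg_left hD' (by positivity) (by exact_mod_cast h₂)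

end Rseq

theorem Rseq_ratio_limits (D : ℝ) (hD1 : 1 < D) :
    Tendsto (fun n : ℕ => Rseq D (2 * n) / Rseq D n) atTop (nhds D) ∧
      Tendsto (fun n : ℕ => Rseq D (n + 1) / Rseq D n) atTop (nhds 1) :=
  ⟨tendsto_of_mem_Icc_add_div ((eventually_ge_atTop 2).mono fun _ hn =>
      Rseq.two_mul_div_mem_Icc hD1.le hn),
    tendsto_of_mem_Icc_add_div ((eventually_ge_atTop 2).mono fun _ hn =>
      Rseq.succ_div_mem_Icc hD1.le hn)⟩
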